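/- arXiv:2601.07665 — 7 statements merged into one kernel-verified Lean document; each statement's English description precedes it below -/
import Mathlib

section
/- Let T : ℝ^n → ℝ^n be nonexpansive with nonempty fixed-point set, let λ ∈ (0,1), and let (v^t)_{t∈ℕ} be a summable sequence in ℝ^n. Then for every initial point x^0 ∈ ℝ^n, the inexact Krasnosel'skii–Mann iteration x^{t+1} = x^t + λ(T(x^t) − x^t) + v^t generates a sequence (x^t) that converges to some point x⋆ with T(x⋆) = x⋆; in particular dist(x^t, fix T) → 0 as t → ∞. -/
open Filter Topology

private lemma km_identity {E : Type*} [NormedAddCommGroup E] [InnerProductSpace ℝ E]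
    (u w : E) (l : ℝ) :
    ‖(1 - l) • u + l • w‖ ^ 2
      = (1 - l) * ‖u‖ ^ 2 + l * ‖w‖ ^ 2 - l * (1 - l) * ‖u - w‖ ^ 2 := by
  rw [norm_add_sq_real, norm_smul, norm_smul, real_inner_smul_left, real_inner_smul_right,
    norm_sub_sq_real, Real.norm_eq_abs, Real.norm_eq_abs, mul_pow, mul_pow, sq_abs, sq_abs]
  ring

set_option maxHeartbeats 1000000

/-- Convergence of the inexact Krasnosel'skii–Mann iteration
`x^{t+1} = x^t + λ (T x^t - x^t) + v^t` with summable perturbations `v`: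
the iterates converge to a fixed point of the nonexpansive map `T`, and in
particular the distance to the fixed-point set vanishes. -/
theorem inexact_KM_converges
    {n : ℕ} (T : EuclideanSpace ℝ (Fin n) → EuclideanSpace ℝ (Fin n))
    (hT : ∀ x y, ‖T x - T y‖ ≤ ‖x - y‖)
    (hfix : {p : EuclideanSpace ℝ (Fin n) | T p = p}.Nonempty)
    (lam : ℝ) (hlam0 : 0 < lam) (hlam1 : lam < 1)
    (v : ℕ → EuclideanSpace ℝ (Fin n)) (hv : Summable fun t => ‖v t‖)
    (x : ℕ → EuclideanSpace ℝ (Fin n))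
    (hx : ∀ t, x (t + 1) = x t + lam • (T (x t) - x t) + v t) :
    ∃ xstar : EuclideanSpace ℝ (Fin n), T xstar = xstar ∧
      Tendsto x atTop (𝓝 xstar) ∧
      Tendsto (fun t => Metric.infDist (x t) {p | T p = p}) atTop (𝓝 0) := by
  obtain ⟨p, hp⟩ := hfix
  simp only [Set.mem_setOf_eq] at hp
  set e : ℕ → ℝ := fun t => ‖v t‖ with he_def
  set S : ℝ := ∑' t, e t with hS_def
  have he_nonneg : ∀ t, 0 ≤ e t := fun t => norm_nonneg _
  set P : ℕ → ℝ := fun t => ∑ s ∈ Finset.range t, e s with hP_def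
  have hP_le : ∀ t, P t ≤ S := fun t => Summable.sum_le_tsum _ (fun i _ => he_nonneg i) hv
  have he_le : ∀ t, e t ≤ S := fun t => Summable.le_tsum hv t (fun i _ => he_nonneg i)
  have hS_nonneg : 0 ≤ S := le_trans (he_nonneg 0) (he_le 0)
  have hPS : Tendsto P atTop (𝓝 S) := hv.hasSum.tendsto_sum_nat
  -- decomposition of one step
  have hstep : ∀ (q : EuclideanSpace ℝ (Fin n)), T q = q → ∀ t,
      x (t + 1) - q = ((1 - lam) • (x t - q) + lam • (T (x t) - T q)) + v t := by
    intro q hq t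
    rw [hx t, hq]
    module
  -- quasi-Fejér property
  have key : ∀ (q : EuclideanSpace ℝ (Fin n)), T q = q → ∀ t,
      ‖x (t + 1) - q‖ ≤ ‖x t - q‖ + e t := by
    intro q hq t
    rw [hstep q hq t]
    have h1 := norm_add_le ((1 - lam) • (x t - q) + lam • (T (x t) - T q)) (v t)
    have h2 := norm_add_le ((1 - lam) • (x t - q)) (lam • (T (x t) - T q))
    rw [norm_smul, norm_smul, Real.norm_eq_abs, Real.norm_eq_abs,
      abs_of_pos (by linarith), abs_of_pos hlam0] at h2
    have h3 := hT (x t) q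
    nlinarith [norm_nonneg (x t - q)]
  -- boundedness
  set M : ℝ := ‖x 0 - p‖ + S with hM_def
  have hbd : ∀ t, ‖x t - p‖ ≤ ‖x 0 - p‖ + P t := by
    intro t
    induction t with
    | zero => simp [hP_def]
    | succ t ih =>
        have := key p hp t
        have hPsucc : P (t + 1) = P t + e t := Finset.sum_range_succ _ _
        linarith
  have hM : ∀ t, ‖x t - p‖ ≤ M := fun t => le_trans (hbd t) (by
    have := hP_le t; rw [hM_def]; linarith)
  have hM_nonneg : 0 ≤ M := le_trans (norm_nonneg _) (hM 0)
  -- residual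
  set r : ℕ → ℝ := fun t => ‖T (x t) - x t‖ with hr_def
  have hr_nonneg : ∀ t, 0 ≤ r t := fun t => norm_nonneg _
  -- key squared inequality
  have key2 : ∀ t, lam * (1 - lam) * r t ^ 2
      ≤ ‖x t - p‖ ^ 2 - ‖x (t + 1) - p‖ ^ 2 + (2 * M + S) * e t := by
    intro t
    set u := x t - p with hu
    set w := T (x t) - T p with hw
    set y := (1 - lam) • u + lam • w with hy
    have hy2 : ‖y‖ ^ 2 = (1 - lam) * ‖u‖ ^ 2 + lam * ‖w‖ ^ 2
        - lam * (1 - lam) * ‖u - w‖ ^ 2 := km_identity u w lam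
    have huw : u - w = x t - T (x t) := by rw [hu, hw, hp]; abel
    have huwr : ‖u - w‖ = r t := by rw [huw, hr_def]; exact (norm_sub_rev _ _)
    have hwu : ‖w‖ ≤ ‖u‖ := hT (x t) p
    have hyM : ‖y‖ ≤ ‖u‖ := by
      have h2 := norm_add_le ((1 - lam) • u) (lam • w)
      rw [norm_smul, norm_smul, Real.norm_eq_abs, Real.norm_eq_abs,
        abs_of_pos (by linarith), abs_of_pos hlam0] at h2
      nlinarith
    have htri : ‖x (t + 1) - p‖ ≤ ‖y‖ + e t := by
      rw [hstep p hp t]; exact norm_add_le _ _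
    have hsq : ‖x (t + 1) - p‖ ^ 2 ≤ (‖y‖ + e t) ^ 2 := by
      have h0 : (0:ℝ) ≤ ‖x (t + 1) - p‖ := norm_nonneg _
      nlinarith
    have hw2 : ‖w‖ ^ 2 ≤ ‖u‖ ^ 2 := by nlinarith [norm_nonneg w, norm_nonneg u]
    have huM : ‖u‖ ≤ M := hM t
    have heS := he_le t
    have he0 := he_nonneg t
    have hy0 : 0 ≤ ‖y‖ := norm_nonneg _
    rw [huwr] at hy2
    have hy2' : ‖y‖ ^ 2 ≤ ‖u‖ ^ 2 - lam * (1 - lam) * r t ^ 2 := by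
      have h5 : lam * ‖w‖ ^ 2 ≤ lam * ‖u‖ ^ 2 :=
        mul_le_mul_of_nonneg_left hw2 hlam0.le
      linarith
    have h6 : 2 * ‖y‖ * e t ≤ 2 * M * e t := by
      have := mul_nonneg (sub_nonneg.2 (hyM.trans huM)) he0
      linarith
    have h7 : e t * e t ≤ S * e t := by
      have := mul_nonneg (sub_nonneg.2 heS) he0
      linarith
    have h8 : (‖y‖ + e t) ^ 2 = ‖y‖ ^ 2 + 2 * ‖y‖ * e t + e t * e t := by ring
    linarith
  -- summability of residuals
  set c : ℝ := lam * (1 - lam) with hc_def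
  have hc : 0 < c := mul_pos hlam0 (by linarith)
  have hsumbd : ∀ N, ∑ t ∈ Finset.range N, c * r t ^ 2
      ≤ ‖x 0 - p‖ ^ 2 + (2 * M + S) * S := by
    intro N
    have h1 : ∑ t ∈ Finset.range N, c * r t ^ 2
        ≤ ∑ t ∈ Finset.range N,
            ((‖x t - p‖ ^ 2 - ‖x (t + 1) - p‖ ^ 2) + (2 * M + S) * e t) :=
      Finset.sum_le_sum fun t _ => by have := key2 t; linarith
    rw [Finset.sum_add_distrib, Finset.sum_range_sub' (f := fun t => ‖x t - p‖ ^ 2)] at h1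
    have h2 : ∑ s ∈ Finset.range N, e s ≤ S := Summable.sum_le_tsum _ (fun i _ => he_nonneg i) hv
    have h3 : ∑ s ∈ Finset.range N, (2 * M + S) * e s ≤ (2 * M + S) * S := by
      rw [← Finset.mul_sum]
      exact mul_le_mul_of_nonneg_left h2 (by linarith)
    have h4 := sq_nonneg ‖x N - p‖
    linarith
  have hsummable : Summable (fun t => c * r t ^ 2) :=
    summable_of_sum_range_le (fun t => by positivity) hsumbd
  have hr2_to0 : Tendsto (fun t => c * r t ^ 2) atTop (𝓝 0) :=
    hsummable.tendsto_atTop_zero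
  have hr_to0 : Tendsto r atTop (𝓝 0) := by
    have h2 : Tendsto (fun t => c * r t ^ 2 / c) atTop (𝓝 0) := by
      have := hr2_to0.div_const c
      rwa [zero_div] at this
    have h1 := (Real.continuous_sqrt.tendsto 0).comp h2
    rw [Real.sqrt_zero] at h1
    have h5 : Real.sqrt ∘ (fun t => c * r t ^ 2 / c) = r := by
      funext t
      simp only [Function.comp_apply]
      rw [mul_comm, mul_div_assoc, div_self hc.ne', mul_one, Real.sqrt_sq (hr_nonneg t)]
    rwa [h5] at h1
  -- convergent subsequence
  have hball : ∀ t, x t ∈ Metric.closedBall p M := by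
    intro t
    rw [Metric.mem_closedBall, dist_eq_norm]
    exact hM t
  obtain ⟨q, hqmem, φ, hφmono, hφtend⟩ :=
    (isCompact_closedBall p M).tendsto_subseq hball
  -- q is a fixed point
  have hq : T q = q := by
    have h1 : Tendsto (fun k => ‖x (φ k) - q‖) atTop (𝓝 0) := by
      have h0 : Tendsto (fun k => x (φ k) - q) atTop (𝓝 (0 : EuclideanSpace ℝ (Fin n))) := by
        simpa using hφtend.sub_const q
      simpa using h0.norm
    have h2 : Tendsto (fun k => 2 * ‖x (φ k) - q‖ + r (φ k)) atTop (𝓝 0) := by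
      have := (h1.const_mul 2).add (hr_to0.comp hφmono.tendsto_atTop)
      simpa using this
    have h3 : ‖T q - q‖ ≤ 0 := by
      refine ge_of_tendsto h2 (Eventually.of_forall fun k => ?_)
      have hineq : ‖T q - q‖ ≤ ‖T q - T (x (φ k))‖ + ‖T (x (φ k)) - x (φ k)‖
          + ‖x (φ k) - q‖ := by
        have := norm_add₃_le (a := T q - T (x (φ k))) (b := T (x (φ k)) - x (φ k))
          (c := x (φ k) - q)
        simpa using this
      have h4 := hT q (x (φ k))
      rw [norm_sub_rev q (x (φ k))] at h4
      simp only [hr_def]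
      linarith
    have := le_antisymm h3 (norm_nonneg _)
    rwa [norm_eq_zero, sub_eq_zero] at this
  -- full convergence to q
  have hkeyq := key q hq
  set b : ℕ → ℝ := fun t => ‖x t - q‖ - P t with hb_def
  have hb_anti : Antitone b := by
    apply antitone_nat_of_succ_le
    intro t
    have := hkeyq t
    have hPsucc : P (t + 1) = P t + e t := Finset.sum_range_succ _ _
    simp only [hb_def]
    linarith
  have hb_bdd : BddBelow (Set.range b) := by
    refine ⟨-S, ?_⟩
    rintro _ ⟨t, rfl⟩
    have := hP_le t
    have := norm_nonneg (x t - q)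
    simp only [hb_def]
    linarith
  have hb_tend : Tendsto b atTop (𝓝 (⨅ t, b t)) := tendsto_atTop_ciInf hb_anti hb_bdd
  have haq_tend : Tendsto (fun t => ‖x t - q‖) atTop (𝓝 ((⨅ t, b t) + S)) := by
    have := hb_tend.add hPS
    simpa [hb_def] using this
  have haqφ : Tendsto (fun k => ‖x (φ k) - q‖) atTop (𝓝 0) := by
    have h0 : Tendsto (fun k => x (φ k) - q) atTop (𝓝 (0 : EuclideanSpace ℝ (Fin n))) := by
      simpa using hφtend.sub_const q
    simpa using h0.norm
  have hlim0 : (⨅ t, b t) + S = 0 :=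
    tendsto_nhds_unique (haq_tend.comp hφmono.tendsto_atTop) haqφ
  rw [hlim0] at haq_tend
  have hxq : Tendsto x atTop (𝓝 q) := by
    rw [tendsto_iff_norm_sub_tendsto_zero]
    exact haq_tend
  refine ⟨q, hq, hxq, ?_⟩
  have hcont : Continuous (fun z : EuclideanSpace ℝ (Fin n) =>
      Metric.infDist z {p | T p = p}) := Metric.continuous_infDist_pt _
  have := (hcont.tendsto q).comp hxq
  have hq0 : Metric.infDist q {p | T p = p} = 0 :=
    Metric.infDist_zero_of_mem hq
  rwa [hq0] at this
end

section
/- Let T : ℝ^n → ℝ^n be nonexpansive with nonempty fixed-point set fix T, let λ ∈ (0,1), let κ > 0, and let X ⊆ ℝ^n be a set on which T is metrically sub-regular: dist(x, fix T) ≤ κ‖x − T x‖ for all x ∈ X. Then for every x ∈ X, writing T^λ(x) = x + λ(T(x) − x), one has dist²(T^λ(x), fix T) ≤ ζ · dist²(x, fix T), where ζ = κ²/(κ² + λ(1−λ)) ∈ (0,1). -/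
open Metric

lemma combo_norm_sq {E : Type*} [NormedAddCommGroup E] [InnerProductSpace ℝ E]
    (a b : E) (t : ℝ) :
    ‖(1 - t) • a + t • b‖ ^ 2 =
      (1 - t) * ‖a‖ ^ 2 + t * ‖b‖ ^ 2 - t * (1 - t) * ‖a - b‖ ^ 2 := by
  simp only [← real_inner_self_eq_norm_sq, inner_add_left, inner_add_right,
    inner_sub_left, inner_sub_right, real_inner_smul_left, real_inner_smul_right]
  rw [real_inner_comm b a]
  ring

/-- Under metric sub-regularity with constant `κ` on a set `X`,
one step of the λ-averaged map `T^λ(x) = x + λ(T x - x)` contracts the squared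
distance to the fixed-point set by the factor `ζ = κ²/(κ² + λ(1-λ)) ∈ (0,1)`. -/
theorem KM_linear_contraction_under_metric_subregularity
    {n : ℕ} (T : EuclideanSpace ℝ (Fin n) → EuclideanSpace ℝ (Fin n))
    (hT : ∀ x y, ‖T x - T y‖ ≤ ‖x - y‖)
    (hfix : {p : EuclideanSpace ℝ (Fin n) | T p = p}.Nonempty)
    (lam : ℝ) (hlam0 : 0 < lam) (hlam1 : lam < 1)
    (κ : ℝ) (hκ : 0 < κ)
    (X : Set (EuclideanSpace ℝ (Fin n)))
    (hreg : ∀ x ∈ X, Metric.infDist x {p | T p = p} ≤ κ * ‖x - T x‖) :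
    κ ^ 2 / (κ ^ 2 + lam * (1 - lam)) ∈ Set.Ioo (0 : ℝ) 1 ∧
      ∀ x ∈ X,
        Metric.infDist (x + lam • (T x - x)) {p | T p = p} ^ 2 ≤
          κ ^ 2 / (κ ^ 2 + lam * (1 - lam)) *
            Metric.infDist x {p | T p = p} ^ 2 := by
  set F := {p : EuclideanSpace ℝ (Fin n) | T p = p} with hF
  have ha : 0 < lam * (1 - lam) := mul_pos hlam0 (by linarith)
  have hκ2 : 0 < κ ^ 2 := by positivity
  have hden : 0 < κ ^ 2 + lam * (1 - lam) := by linarith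
  refine ⟨⟨div_pos hκ2 hden, (div_lt_one hden).mpr (by linarith)⟩, ?_⟩
  intro x hx
  set u := x + lam • (T x - x) with hu
  set d := Metric.infDist u F with hd
  set D := Metric.infDist x F with hD
  set N := ‖x - T x‖ with hN
  have hd0 : 0 ≤ d := Metric.infDist_nonneg
  have hD0 : 0 ≤ D := Metric.infDist_nonneg
  -- key inequality: d^2 + a N^2 ≤ ‖x - y‖^2 for every fixed point y
  have key : ∀ y ∈ F, d ^ 2 + lam * (1 - lam) * N ^ 2 ≤ ‖x - y‖ ^ 2 := by
    intro y hy
    have hy' : T y = y := hy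
    have hdy : d ≤ ‖u - y‖ := by
      rw [← dist_eq_norm]
      exact Metric.infDist_le_dist_of_mem hy
    have huy : u - y = (1 - lam) • (x - y) + lam • (T x - y) := by
      rw [hu]
      module
    have hTxy : ‖T x - y‖ ≤ ‖x - y‖ := by
      calc ‖T x - y‖ = ‖T x - T y‖ := by rw [hy']
        _ ≤ ‖x - y‖ := hT x y
    have hsq : ‖u - y‖ ^ 2 =
        (1 - lam) * ‖x - y‖ ^ 2 + lam * ‖T x - y‖ ^ 2
          - lam * (1 - lam) * ‖(x - y) - (T x - y)‖ ^ 2 := by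
      rw [huy, combo_norm_sq]
    have hxy : (x - y) - (T x - y) = x - T x := by abel
    rw [hxy] at hsq
    have h1 : ‖u - y‖ ^ 2 ≤ ‖x - y‖ ^ 2 - lam * (1 - lam) * N ^ 2 := by
      rw [hsq, hN]
      nlinarith [pow_le_pow_left₀ (norm_nonneg (T x - y)) hTxy 2, hlam0.le]
    nlinarith [norm_nonneg (u - y)]
  -- hence d^2 + a N^2 ≤ D^2
  have hmain : d ^ 2 + lam * (1 - lam) * N ^ 2 ≤ D ^ 2 := by
    set c := Real.sqrt (d ^ 2 + lam * (1 - lam) * N ^ 2) with hc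
    have hc0 : 0 ≤ c := Real.sqrt_nonneg _
    have hcle : c ≤ D := by
      by_contra h
      push_neg at h
      obtain ⟨y, hy, hlt⟩ := (Metric.infDist_lt_iff hfix).mp h
      have hxy : c ≤ dist x y := by
        rw [dist_eq_norm]
        calc c ≤ Real.sqrt (‖x - y‖ ^ 2) := Real.sqrt_le_sqrt (key y hy)
          _ = ‖x - y‖ := Real.sqrt_sq (norm_nonneg _)
      linarith
    have hc2 : c ^ 2 = d ^ 2 + lam * (1 - lam) * N ^ 2 :=
      Real.sq_sqrt (by positivity)
    nlinarith
  have hDN : D ^ 2 ≤ κ ^ 2 * N ^ 2 := by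
    have := hreg x hx
    nlinarith [norm_nonneg (x - T x)]
  rw [div_mul_eq_mul_div, le_div_iff₀ hden]
  nlinarith [mul_le_mul_of_nonneg_right hmain hden.le, mul_le_mul_of_nonneg_left hDN ha.le, mul_nonneg (mul_nonneg ha.le ha.le) (sq_nonneg N)]
end

section
/- Let T : ℝ^n → ℝ^n be nonexpansive with nonempty fixed-point set fix T, let λ ∈ (0,1), let x⋆ ∈ fix T, and let r₀, r_v ≥ 0. Let (z^t)_{t∈ℕ} be any sequence with z^0 in the closed ball of radius r₀ about x⋆ such that, for some c > 0 and ρ ∈ (0,1), dist(z^t, fix T) ≤ cρ^t and ‖z^{t+1} − z^t‖ ≤ cρ^t for all t ∈ ℕ. If 3c < r_v(1−ρ), then there exists a sequence (v^t) with ∑_{t=0}^∞ ‖v^t‖ < r_v such that the sequence (x^t) defined by x^0 = z^0 and x^{t+1} = x^t + λ(T(x^t) − x^t) + v^t satisfies x^t = z^t for all t ∈ ℕ. -/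
/-- Local completeness of the perturbed Krasnosel'skii–Mann
parametrization: any sequence `z` that converges linearly to `fix T` (with
residuals and increments bounded by `cρ^t`, and `3c < r_v(1-ρ)`) coincides with a
perturbed KM iteration `x^{t+1} = x^t + λ(T x^t - x^t) + v^t`, `x^0 = z^0`, for
some perturbation sequence `v` with `∑_t ‖v^t‖ < r_v`. -/
theorem linearly_convergent_sequences_are_perturbed_KM
    {n : ℕ} (T : EuclideanSpace ℝ (Fin n) → EuclideanSpace ℝ (Fin n))
    (hT : ∀ x y, ‖T x - T y‖ ≤ ‖x - y‖)
    (xstar : EuclideanSpace ℝ (Fin n)) (hxstar : T xstar = xstar)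
    (lam : ℝ) (hlam0 : 0 < lam) (hlam1 : lam < 1)
    (r₀ rv : ℝ) (hr₀ : 0 ≤ r₀) (hrv : 0 ≤ rv)
    (z : ℕ → EuclideanSpace ℝ (Fin n))
    (hz0 : z 0 ∈ Metric.closedBall xstar r₀)
    (c : ℝ) (hc : 0 < c) (ρ : ℝ) (hρ0 : 0 < ρ) (hρ1 : ρ < 1)
    (hzdist : ∀ t : ℕ, Metric.infDist (z t) {p | T p = p} ≤ c * ρ ^ t)
    (hzstep : ∀ t : ℕ, ‖z (t + 1) - z t‖ ≤ c * ρ ^ t)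
    (hsmall : 3 * c < rv * (1 - ρ)) :
    ∃ v : ℕ → EuclideanSpace ℝ (Fin n),
      (Summable fun t => ‖v t‖) ∧ ∑' t, ‖v t‖ < rv ∧
      ∃ x : ℕ → EuclideanSpace ℝ (Fin n),
        x 0 = z 0 ∧
        (∀ t, x (t + 1) = x t + lam • (T (x t) - x t) + v t) ∧
        ∀ t, x t = z t := by
  set v : ℕ → EuclideanSpace ℝ (Fin n) :=
    fun t => z (t + 1) - z t - lam • (T (z t) - z t) with hv
  have hne : ({p | T p = p} : Set (EuclideanSpace ℝ (Fin n))).Nonempty := ⟨xstar, hxstar⟩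
  have hbound : ∀ t, ‖v t‖ ≤ 3 * c * ρ ^ t := by
    intro t
    have hres : ‖T (z t) - z t‖ ≤ 2 * (c * ρ ^ t) := by
      have h1 : ‖T (z t) - z t‖ / 2 ≤ Metric.infDist (z t) {p | T p = p} := by
        by_contra hcon
        push_neg at hcon
        obtain ⟨p, hp, hdp⟩ := (Metric.infDist_lt_iff hne).1 hcon
        have hp' : T p = p := hp
        have hle : ‖T (z t) - z t‖ ≤ 2 * ‖z t - p‖ := by
          calc ‖T (z t) - z t‖ ≤ ‖T (z t) - T p‖ + ‖T p - z t‖ := norm_sub_le_norm_sub_add_norm_sub _ _ _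
          _ ≤ ‖z t - p‖ + ‖p - z t‖ := by
              have h := hT (z t) p
              rw [hp'] at h ⊢
              linarith
          _ = 2 * ‖z t - p‖ := by rw [norm_sub_rev p]; ring
        rw [dist_eq_norm] at hdp
        linarith
      have := le_trans h1 (hzdist t)
      linarith
    have h2 : ‖lam • (T (z t) - z t)‖ ≤ 2 * (c * ρ ^ t) := by
      rw [norm_smul, Real.norm_eq_abs, abs_of_pos hlam0]
      nlinarith [norm_nonneg (T (z t) - z t)]
    calc ‖v t‖ ≤ ‖z (t + 1) - z t‖ + ‖lam • (T (z t) - z t)‖ := norm_sub_le _ _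
    _ ≤ c * ρ ^ t + 2 * (c * ρ ^ t) := add_le_add (hzstep t) h2
    _ = 3 * c * ρ ^ t := by ring
  have hgeo : Summable fun t : ℕ => 3 * c * ρ ^ t :=
    (summable_geometric_of_lt_one hρ0.le hρ1).mul_left _
  have hsum : Summable fun t => ‖v t‖ :=
    Summable.of_nonneg_of_le (fun t => norm_nonneg _) hbound hgeo
  refine ⟨v, hsum, ?_, z, rfl, ?_, fun t => rfl⟩
  · have h1 : ∑' t, ‖v t‖ ≤ ∑' t : ℕ, 3 * c * ρ ^ t :=
      Summable.tsum_le_tsum hbound hsum hgeo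
    have h2 : ∑' t : ℕ, 3 * c * ρ ^ t = 3 * c * (1 - ρ)⁻¹ := by
      rw [tsum_mul_left, tsum_geometric_of_lt_one hρ0.le hρ1]
    have h3 : 3 * c * (1 - ρ)⁻¹ < rv := by
      rw [mul_inv_lt_iff₀ (by linarith)]
      linarith [hsmall]
    linarith
  · intro t
    simp only [hv]
    abel
end

section
/- Fix λ ∈ (0,1) and z^0 ∈ ℝ^n with z^0 ≠ 0, and let T = 0 be the zero operator on ℝ^n. Then there exists NO summable sequence (v^t) in ℝ^n such that the iteration x^0 = z^0, x^{t+1} = (1−λ)x^t + v^t satisfies x^t = z^0/t for all t ≥ 1. Equivalently, the unique matching sequence v^t = z^0(λt + λ − 1)/(t(t+1)) (t ≥ 1), v^0 = λz^0, satisfies ∑_{t=0}^∞ ‖v^t‖ = ∞. -/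
/-! Matching `x^t = z^0/t` forces `v^t = x^{t+1} - (1-λ) x^t = c_t z^0` for `t ≥ 1`, where
`c_t = (λt + λ - 1)/(t(t+1)) = λ/t - 1/(t(t+1))`. The second term is summable and the first is
the harmonic series scaled by `λ ≠ 0`, so `∑ ‖v^t‖ = ‖z^0‖ ∑ |c_t| = ∞`. -/

open Filter

/-- The coefficient `c_t` with `x^{t+1} - (1-λ) x^t = c_t z^0` when `x^t = z^0/t`. -/
noncomputable def slowPerturbationCoeff (lam : ℝ) (t : ℕ) : ℝ :=
  (lam * t + lam - 1) / (t * (t + 1))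

lemma slowPerturbationCoeff_eq_sub (lam : ℝ) (t : ℕ) :
    slowPerturbationCoeff lam t = lam * (t : ℝ)⁻¹ - ((t : ℝ) * (t + 1))⁻¹ := by
  rcases Nat.eq_zero_or_pos t with rfl | ht
  · simp [slowPerturbationCoeff]
  · have ht' : (t : ℝ) ≠ 0 := by positivity
    rw [slowPerturbationCoeff]
    field_simp

lemma slowPerturbationCoeff_eq_inv_sub (lam : ℝ) {t : ℕ} (ht : t ≠ 0) :
    slowPerturbationCoeff lam t = ((t + 1 : ℕ) : ℝ)⁻¹ - (1 - lam) * (t : ℝ)⁻¹ := by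
  have ht' : (t : ℝ) ≠ 0 := by exact_mod_cast ht
  rw [slowPerturbationCoeff]
  push_cast
  field_simp
  ring

lemma summable_inv_natCast_mul_succ : Summable fun t : ℕ => ((t : ℝ) * (t + 1))⁻¹ := by
  refine (Real.summable_nat_pow_inv.mpr one_lt_two).of_nonneg_of_le (fun t => by positivity)
    fun t => ?_
  rcases Nat.eq_zero_or_pos t with rfl | ht
  · simp
  · have ht' : (0 : ℝ) < t := by exact_mod_cast ht
    exact inv_anti₀ (by positivity) (by nlinarith)

lemma not_summable_abs_slowPerturbationCoeff {lam : ℝ} (hlam : lam ≠ 0) :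
    ¬ Summable fun t => |slowPerturbationCoeff lam t| := by
  intro h
  have hharmonic : Summable fun t : ℕ => lam * (t : ℝ)⁻¹ :=
    ((summable_abs_iff.mp h).add summable_inv_natCast_mul_succ).congr fun t => by
      rw [slowPerturbationCoeff_eq_sub, sub_add_cancel]
  exact Real.not_summable_natCast_inv ((summable_mul_left_iff hlam).mp hharmonic)

lemma not_summable_norm_of_eventually_eq_smul {E : Type*} [NormedAddCommGroup E]
    [NormedSpace ℝ E] {lam : ℝ} (hlam : lam ≠ 0) {z : E} (hz : z ≠ 0) {v : ℕ → E}
    (hv : ∀ᶠ t in atTop, v t = slowPerturbationCoeff lam t • z) :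
    ¬ Summable fun t => ‖v t‖ := by
  rw [summable_congr_atTop (hv.mono fun t ht => by rw [ht, norm_smul, Real.norm_eq_abs]),
    summable_mul_right_iff (norm_ne_zero_iff.mpr hz)]
  exact not_summable_abs_slowPerturbationCoeff hlam

lemma perturbation_eq_smul_of_iterate_eq_inv_smul {E : Type*} [AddCommGroup E] [Module ℝ E]
    {lam : ℝ} {z : E} {x v : ℕ → E} (hrec : ∀ t, x (t + 1) = (1 - lam) • x t + v t)
    (hx : ∀ t : ℕ, 1 ≤ t → x t = (t : ℝ)⁻¹ • z) {t : ℕ} (ht : 1 ≤ t) :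
    v t = slowPerturbationCoeff lam t • z := by
  have hstep := hrec t
  rw [hx (t + 1) (Nat.le_add_left 1 t), hx t ht] at hstep
  rw [slowPerturbationCoeff_eq_inv_sub lam (Nat.one_le_iff_ne_zero.mp ht),
    eq_sub_of_add_eq' hstep.symm]
  module

theorem no_summable_perturbation_for_slow_sequence_general
    {n : ℕ} (lam : ℝ) (hlam0 : 0 < lam)
    (z0 : EuclideanSpace ℝ (Fin n)) (hz0 : z0 ≠ 0) :
    (¬ ∃ v : ℕ → EuclideanSpace ℝ (Fin n),
        (Summable fun t => ‖v t‖) ∧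
        ∃ x : ℕ → EuclideanSpace ℝ (Fin n),
          x 0 = z0 ∧
          (∀ t, x (t + 1) = (1 - lam) • x t + v t) ∧
          ∀ t : ℕ, 1 ≤ t → x t = ((t : ℝ))⁻¹ • z0) ∧
      ¬ Summable fun t : ℕ =>
          ‖if t = 0 then lam • z0
            else ((lam * t + lam - 1) / (t * (t + 1))) • z0‖ := by
  constructor
  · rintro ⟨v, hv, x, -, hrec, hx⟩
    exact not_summable_norm_of_eventually_eq_smul hlam0.ne' hz0
      ((eventually_ge_atTop 1).mono fun t ht =>
        perturbation_eq_smul_of_iterate_eq_inv_smul hrec hx ht) hv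
  · refine not_summable_norm_of_eventually_eq_smul hlam0.ne' hz0 ?_
    filter_upwards [eventually_ne_atTop 0] with t ht
    simp only [ht, if_false, slowPerturbationCoeff]

/-- For the zero operator `T = 0` and `z^0 ≠ 0`, no summable
perturbation sequence `v` makes the iteration `x^0 = z^0`, `x^{t+1} = (1-λ)x^t + v^t`
reproduce the sequence `z^t = z^0/t` (`t ≥ 1`). Equivalently, the unique matching
sequence `v^0 = λ z^0`, `v^t = z^0 (λt + λ - 1)/(t(t+1))` (`t ≥ 1`) is not summable. -/
theorem no_summable_perturbation_for_slow_sequence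
    {n : ℕ} (lam : ℝ) (hlam0 : 0 < lam) (hlam1 : lam < 1)
    (z0 : EuclideanSpace ℝ (Fin n)) (hz0 : z0 ≠ 0) :
    (¬ ∃ v : ℕ → EuclideanSpace ℝ (Fin n),
        (Summable fun t => ‖v t‖) ∧
        ∃ x : ℕ → EuclideanSpace ℝ (Fin n),
          x 0 = z0 ∧
          (∀ t, x (t + 1) = (1 - lam) • x t + v t) ∧
          ∀ t : ℕ, 1 ≤ t → x t = ((t : ℝ))⁻¹ • z0) ∧
      ¬ Summable fun t : ℕ =>
          ‖if t = 0 then lam • z0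
            else ((lam * t + lam - 1) / (t * (t + 1))) • z0‖ :=
  no_summable_perturbation_for_slow_sequence_general lam hlam0 z0 hz0
end

section
/- Let T : ℝ^n → ℝ^n be α-averaged for some α ∈ (0,1), i.e., T = (1−α)Id + αR for some nonexpansive R : ℝ^n → ℝ^n, and suppose fix T ≠ ∅. Then for every summable sequence (v^t) in ℝ^n and every z^0 ∈ ℝ^n, the perturbed Banach–Picard iteration z^{t+1} = T(z^t) + v^t converges to a point z⋆ ∈ fix T (moreover fix T = fix R). -/
/-!
For a fixed point `p` of `R`, the identity
`‖(1-α)a + αb‖² + α(1-α)‖a-b‖² = (1-α)‖a‖² + α‖b‖²` applied to `a = x - p`, `b = R x - p`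
shows that one step of `T` decreases `‖· - p‖²` by at least `α(1-α)‖x - R x‖²`. Hence the
perturbed iterates are quasi-Fejér with respect to `fix R` (distances to fixed points increase
by at most `‖v t‖`), are bounded, and have square-summable residuals `z t - R (z t)`. A
convergent subsequence therefore has a fixed point as its limit, and quasi-Fejér monotonicity
towards that limit upgrades subsequential convergence to convergence of the whole sequence.
-/

open Filter Topology

section RealSequences

variable {b ε : ℕ → ℝ}

theorem summable_of_succ_le_sub_add {a d e : ℕ → ℝ} (ha : ∀ t, 0 ≤ a t) (hd : ∀ t, 0 ≤ d t)
    (he : ∀ t, 0 ≤ e t) (he_sum : Summable e) (h : ∀ t, a (t + 1) ≤ a t - d t + e t) :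
    Summable d := by
  refine summable_of_sum_range_le (c := a 0 + ∑' t, e t) hd fun N => ?_
  calc ∑ t ∈ Finset.range N, d t
      ≤ ∑ t ∈ Finset.range N, ((a t - a (t + 1)) + e t) :=
        Finset.sum_le_sum fun t _ => by linarith [h t]
    _ = a 0 - a N + ∑ t ∈ Finset.range N, e t := by
        rw [Finset.sum_add_distrib, Finset.sum_range_sub']
    _ ≤ a 0 + ∑' t, e t := by
        linarith [ha N, he_sum.sum_le_tsum (Finset.range N) fun t _ => he t]

theorem antitone_add_tsum_nat_add (hb : ∀ t, b (t + 1) ≤ b t + ε t) (hε : Summable ε) :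
    Antitone fun t => b t + ∑' s, ε (s + t) := by
  refine antitone_nat_of_succ_le fun t => ?_
  have hsplit : ∑' s, ε (s + t) = ε t + ∑' s, ε (s + (t + 1)) := by
    rw [((summable_nat_add_iff t).2 hε).tsum_eq_zero_add, zero_add]
    simp only [Nat.add_right_comm _ 1 t, Nat.add_assoc]
  linarith [hb t]

theorem le_add_tsum_of_succ_le_add (hb : ∀ t, b (t + 1) ≤ b t + ε t) (hε : Summable ε)
    (hε0 : ∀ t, 0 ≤ ε t) (t : ℕ) : b t ≤ b 0 + ∑' s, ε s := by
  have := antitone_add_tsum_nat_add hb hε (Nat.zero_le t)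
  have htail : 0 ≤ ∑' s, ε (s + t) := tsum_nonneg fun s => hε0 (s + t)
  simp only [add_zero] at this
  linarith

theorem tendsto_zero_of_succ_le_add (hb0 : ∀ t, 0 ≤ b t) (hb : ∀ t, b (t + 1) ≤ b t + ε t)
    (hε : Summable ε) (hε0 : ∀ t, 0 ≤ ε t) {φ : ℕ → ℕ} (hφ : StrictMono φ)
    (hbφ : Tendsto (b ∘ φ) atTop (𝓝 0)) : Tendsto b atTop (𝓝 0) := by
  set C := fun t => b t + ∑' s, ε (s + t)
  have hC_anti : Antitone C := antitone_add_tsum_nat_add hb hε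
  have htail_nonneg : ∀ t, 0 ≤ ∑' s, ε (s + t) := fun t => tsum_nonneg fun s => hε0 (s + t)
  have hC_lim : Tendsto C atTop (𝓝 (⨅ t, C t)) :=
    tendsto_atTop_ciInf hC_anti ⟨0, by
      rintro _ ⟨t, rfl⟩
      exact add_nonneg (hb0 t) (htail_nonneg t)⟩
  have hCφ : Tendsto (C ∘ φ) atTop (𝓝 0) := by
    simpa [C, Function.comp_def] using hbφ.add ((tendsto_sum_nat_add ε).comp hφ.tendsto_atTop)
  rw [tendsto_nhds_unique (hC_lim.comp hφ.tendsto_atTop) hCφ] at hC_lim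
  exact squeeze_zero hb0 (fun t => le_add_of_nonneg_right (htail_nonneg t)) hC_lim

end RealSequences

theorem exists_tendsto_of_quasiFejer {X : Type*} [MetricSpace X] [ProperSpace X] {F : Set X}
    {z : ℕ → X} {ε : ℕ → ℝ} (hε : Summable ε) (hε0 : ∀ t, 0 ≤ ε t) (hF : F.Nonempty)
    (hfejer : ∀ q ∈ F, ∀ t, dist (z (t + 1)) q ≤ dist (z t) q + ε t)
    (hcluster : ∀ x (φ : ℕ → ℕ), StrictMono φ → Tendsto (z ∘ φ) atTop (𝓝 x) → x ∈ F) :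
    ∃ x ∈ F, Tendsto z atTop (𝓝 x) := by
  obtain ⟨p, hp⟩ := hF
  have hbounded : ∀ t, z t ∈ Metric.closedBall p (dist (z 0) p + ∑' s, ε s) := fun t =>
    le_add_tsum_of_succ_le_add (b := fun t => dist (z t) p) (hfejer p hp) hε hε0 t
  obtain ⟨x, -, φ, hφ, hzφ⟩ := tendsto_subseq_of_bounded Metric.isBounded_closedBall hbounded
  have hx : x ∈ F := hcluster x φ hφ hzφ
  refine ⟨x, hx, tendsto_iff_dist_tendsto_zero.2 ?_⟩
  exact tendsto_zero_of_succ_le_add (fun t => dist_nonneg) (hfejer x hx) hε hε0 hφ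
    (tendsto_iff_dist_tendsto_zero.1 hzφ)

section Averaged

variable {E : Type*} [NormedAddCommGroup E] [InnerProductSpace ℝ E]

theorem norm_convexComb_sq_add (α : ℝ) (a b : E) :
    ‖(1 - α) • a + α • b‖ ^ 2 + α * (1 - α) * ‖a - b‖ ^ 2 = (1 - α) * ‖a‖ ^ 2 + α * ‖b‖ ^ 2 := by
  simp only [← real_inner_self_eq_norm_sq, inner_add_left, inner_add_right, inner_sub_left,
    inner_sub_right, real_inner_smul_left, real_inner_smul_right, real_inner_comm a b]
  ring

theorem norm_convexComb_sub_sq_add_le {α : ℝ} (hα : 0 ≤ α) {x y p : E}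
    (hy : ‖y - p‖ ≤ ‖x - p‖) :
    ‖(1 - α) • x + α • y - p‖ ^ 2 + α * (1 - α) * ‖x - y‖ ^ 2 ≤ ‖x - p‖ ^ 2 := by
  have h := norm_convexComb_sq_add α (x - p) (y - p)
  rw [show (1 - α) • (x - p) + α • (y - p) = (1 - α) • x + α • y - p by module,
    sub_sub_sub_cancel_right] at h
  rw [h]
  nlinarith [pow_le_pow_left₀ (norm_nonneg _) hy 2]

theorem norm_convexComb_sub_le {α : ℝ} (hα0 : 0 ≤ α) (hα1 : α ≤ 1) {x y p : E}
    (hy : ‖y - p‖ ≤ ‖x - p‖) : ‖(1 - α) • x + α • y - p‖ ≤ ‖x - p‖ := by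
  have h := norm_convexComb_sub_sq_add_le hα0 hy
  have : 0 ≤ α * (1 - α) * ‖x - y‖ ^ 2 := by have := sub_nonneg.2 hα1; positivity
  exact (pow_le_pow_iff_left₀ (norm_nonneg _) (norm_nonneg _) two_ne_zero).1 (by linarith)

variable {R : E → E} {α : ℝ} {v z : ℕ → E}

theorem norm_succ_sub_fixedPt_le (hα0 : 0 ≤ α) (hα1 : α ≤ 1) (hR : LipschitzWith 1 R)
    (hz : ∀ t, z (t + 1) = (1 - α) • z t + α • R (z t) + v t) {p : E} (hp : R p = p) (t : ℕ) :
    ‖z (t + 1) - p‖ ≤ ‖z t - p‖ + ‖v t‖ := by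
  have hRz : ‖R (z t) - p‖ ≤ ‖z t - p‖ := by simpa [hp] using hR.norm_sub_le (z t) p
  calc ‖z (t + 1) - p‖ ≤ ‖(1 - α) • z t + α • R (z t) - p‖ + ‖v t‖ := by
        rw [hz t, add_sub_right_comm]; exact norm_add_le _ _
    _ ≤ ‖z t - p‖ + ‖v t‖ := by gcongr; exact norm_convexComb_sub_le hα0 hα1 hRz

theorem tendsto_sub_self_of_perturbed (hα0 : 0 < α) (hα1 : α < 1) (hR : LipschitzWith 1 R)
    (hz : ∀ t, z (t + 1) = (1 - α) • z t + α • R (z t) + v t) (hv : Summable fun t => ‖v t‖)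
    {p : E} (hp : R p = p) : Tendsto (fun t => z t - R (z t)) atTop (𝓝 0) := by
  have hRz : ∀ x, ‖R x - p‖ ≤ ‖x - p‖ := fun x => by simpa [hp] using hR.norm_sub_le x p
  set M := ‖z 0 - p‖ + ∑' t, ‖v t‖
  have hbound : ∀ t, ‖z t - p‖ ≤ M := le_add_tsum_of_succ_le_add (b := fun t => ‖z t - p‖)
    (norm_succ_sub_fixedPt_le hα0.le hα1.le hR hz hp) hv fun t => norm_nonneg _
  have hdecrease : ∀ t, ‖z (t + 1) - p‖ ^ 2
      ≤ ‖z t - p‖ ^ 2 - α * (1 - α) * ‖z t - R (z t)‖ ^ 2 + 2 * M * ‖v t‖ := by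
    intro t
    set y := (1 - α) • z t + α • R (z t)
    have hy := norm_convexComb_sub_sq_add_le hα0.le (hRz (z t))
    have hstep : ‖z (t + 1) - p‖ ≤ ‖y - p‖ + ‖v t‖ := by
      rw [hz t, add_sub_right_comm]; exact norm_add_le _ _
    have hyM : ‖y - p‖ ≤ M := (norm_convexComb_sub_le hα0.le hα1.le (hRz (z t))).trans (hbound t)
    -- `a² - b² = (a - b)(a + b)` with `a - b ≤ ‖v t‖` and `a + b ≤ 2M`
    nlinarith [mul_nonneg (sub_nonneg.2 hstep) (add_nonneg (norm_nonneg (z (t + 1) - p))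
        (norm_nonneg (y - p))),
      mul_nonneg (norm_nonneg (v t)) (by linarith [hbound (t + 1)] :
        0 ≤ 2 * M - ‖z (t + 1) - p‖ - ‖y - p‖)]
  have hc : 0 < α * (1 - α) := mul_pos hα0 (sub_pos.2 hα1)
  have hsum : Summable fun t => α * (1 - α) * ‖z t - R (z t)‖ ^ 2 :=
    summable_of_succ_le_sub_add (a := fun t => ‖z t - p‖ ^ 2) (fun t => sq_nonneg _)
      (fun t => by positivity) (fun t => by positivity) (hv.mul_left (2 * M)) hdecrease
  have hsq := ((summable_mul_left_iff hc.ne').1 hsum).tendsto_atTop_zero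
  rw [tendsto_zero_iff_norm_tendsto_zero]
  simpa using hsq.sqrt

theorem exists_tendsto_fixedPt_of_perturbed [ProperSpace E] (hα0 : 0 < α) (hα1 : α < 1)
    (hR : LipschitzWith 1 R) (hfix : (Function.fixedPoints R).Nonempty)
    (hz : ∀ t, z (t + 1) = (1 - α) • z t + α • R (z t) + v t) (hv : Summable fun t => ‖v t‖) :
    ∃ x ∈ Function.fixedPoints R, Tendsto z atTop (𝓝 x) := by
  obtain ⟨p, hp⟩ := hfix
  refine exists_tendsto_of_quasiFejer hv (fun t => norm_nonneg _) ⟨p, hp⟩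
    (fun q hq t => ?_) fun x φ hφ hzφ => ?_
  · simpa only [dist_eq_norm] using norm_succ_sub_fixedPt_le hα0.le hα1.le hR hz hq t
  · have hres := (tendsto_sub_self_of_perturbed hα0 hα1 hR hz hv hp).comp hφ.tendsto_atTop
    have hRx : Tendsto (fun k => R (z (φ k))) atTop (𝓝 (R x)) :=
      (hR.continuous.tendsto x).comp hzφ
    have hx : Tendsto (fun k => R (z (φ k))) atTop (𝓝 x) := by
      simpa [Function.comp_def] using hzφ.sub hres
    exact tendsto_nhds_unique hRx hx

end Averaged

/-- Convergence of the perturbed Banach–Picard iteration for an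
`α`-averaged operator `T = (1-α) Id + α R` (with `R` nonexpansive) having a fixed
point: for any summable perturbations `v`, the iterates `z^{t+1} = T(z^t) + v^t`
converge to a fixed point of `T`; moreover `fix T = fix R`. -/
theorem perturbed_picard_averaged_converges
    {n : ℕ} (T R : EuclideanSpace ℝ (Fin n) → EuclideanSpace ℝ (Fin n))
    (α : ℝ) (hα0 : 0 < α) (hα1 : α < 1)
    (hR : ∀ x y, ‖R x - R y‖ ≤ ‖x - y‖)
    (hTR : ∀ w, T w = (1 - α) • w + α • R w)
    (hfix : {w : EuclideanSpace ℝ (Fin n) | T w = w}.Nonempty)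
    (v : ℕ → EuclideanSpace ℝ (Fin n)) (hv : Summable fun t => ‖v t‖)
    (z : ℕ → EuclideanSpace ℝ (Fin n))
    (hz : ∀ t, z (t + 1) = T (z t) + v t) :
    (∃ zstar : EuclideanSpace ℝ (Fin n),
        T zstar = zstar ∧ Tendsto z atTop (𝓝 zstar)) ∧
      {w : EuclideanSpace ℝ (Fin n) | T w = w} =
        {w : EuclideanSpace ℝ (Fin n) | R w = w} := by
  have hfixed : ∀ w, T w = w ↔ R w = w := fun w => by
    rw [hTR, ← AffineMap.lineMap_apply_module, AffineMap.lineMap_eq_left_iff]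
    simp [hα0.ne', eq_comm]
  have hR' : LipschitzWith 1 R :=
    LipschitzWith.of_dist_le_mul fun x y => by simpa [dist_eq_norm] using hR x y
  obtain ⟨p, hp⟩ := hfix
  obtain ⟨x, hx, hzx⟩ := exists_tendsto_fixedPt_of_perturbed hα0 hα1 hR' ⟨p, (hfixed p).1 hp⟩
    (fun t => hTR (z t) ▸ hz t) hv
  exact ⟨⟨x, (hfixed x).2 hx, hzx⟩, Set.ext hfixed⟩
end

section
/- Let J_A, J_B : ℝ^n → ℝ^n be firmly nonexpansive, let C : ℝ^n → ℝ^n be β-cocoercive for some β > 0, and let γ ∈ (0, 2β). Then the Davis–Yin operator T_DY = Id − J_B + J_A ∘ (2J_B − Id − γ C ∘ J_B) is α-averaged with α = 2β/(4β − γ) ∈ (0,1); that is, there exists a nonexpansive map R_DY : ℝ^n → ℝ^n with T_DY = (1−α)Id + αR_DY. -/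
/-!
Write `d = x - y`, `b = J_B x - J_B y`, `a` for the difference of the `J_A`-values and `c` for the
difference of the `C ∘ J_B`-values, so that `T_DY x - T_DY y = d - (b - a)`. Firm nonexpansiveness
of `J_B` and `J_A` gives `⟪d, b - a⟫ ≥ ‖b - a‖² + γ⟪a, c⟫`, and cocoercivity of `C`, through
`‖b - a - 2βc‖² ≥ 0`, gives `‖b - a‖² + 4β⟪a, c⟫ ≥ 0`. Together they yield
`2β‖T_DY x - T_DY y‖² + (2β - γ)‖(Id - T_DY) x - (Id - T_DY) y‖² ≤ 2β‖x - y‖²`,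
which is the standard characterisation of `2β/(4β - γ)`-averagedness.
-/

open scoped RealInnerProductSpace

section

variable {E : Type*} [NormedAddCommGroup E] [InnerProductSpace ℝ E]

def davisYinOperator (JA JB C : E → E) (γ : ℝ) (z : E) : E :=
  z - JB z + JA ((2 : ℝ) • JB z - z - γ • C (JB z))

theorem exists_nonexpansive_eq_averaged_of_norm_sq_add_le {T : E → E} {α : ℝ} (hα : 0 < α)
    (hT : ∀ x y, α * ‖T x - T y‖ ^ 2 + (1 - α) * ‖(x - T x) - (y - T y)‖ ^ 2 ≤
      α * ‖x - y‖ ^ 2) :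
    ∃ R : E → E, (∀ x y, ‖R x - R y‖ ≤ ‖x - y‖) ∧ ∀ z, T z = (1 - α) • z + α • R z := by
  refine ⟨fun z => z + α⁻¹ • (T z - z), fun x y => ?_, fun z => ?_⟩
  · set d := x - y
    set e := (T x - T y) - d
    have hTd : T x - T y = d + e := by simp only [e]; abel
    have hdiff : (x - T x) - (y - T y) = -e := by simp only [e, d]; abel
    have hR : (x + α⁻¹ • (T x - x)) - (y + α⁻¹ • (T y - y)) = d + α⁻¹ • e := by
      simp only [e, d]; module
    have he : 2 * α * ⟪d, e⟫ + ‖e‖ ^ 2 ≤ 0 := by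
      have := hT x y
      rw [hTd, hdiff, norm_neg, norm_add_sq_real] at this
      linarith
    rw [hR, ← sq_le_sq₀ (norm_nonneg _) (norm_nonneg _), norm_add_sq_real, inner_smul_right,
      norm_smul, mul_pow, Real.norm_eq_abs, sq_abs]
    have hexpand : 2 * (α⁻¹ * ⟪d, e⟫) + α⁻¹ ^ 2 * ‖e‖ ^ 2 =
        α⁻¹ ^ 2 * (2 * α * ⟪d, e⟫ + ‖e‖ ^ 2) := by
      field_simp
    linarith [mul_nonpos_of_nonneg_of_nonpos (sq_nonneg α⁻¹) he]
  · simp only [smul_add, smul_smul, mul_inv_cancel₀ hα.ne', one_smul]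
    module

theorem norm_sub_sq_add_inner_le_inner_of_firm {a b c d : E} {γ : ℝ}
    (hb : ‖b‖ ^ 2 ≤ ⟪b, d⟫) (ha : ‖a‖ ^ 2 ≤ ⟪a, (2 : ℝ) • b - d - γ • c⟫) :
    ‖b - a‖ ^ 2 + γ * ⟪a, c⟫ ≤ ⟪d, b - a⟫ := by
  rw [inner_sub_right, inner_sub_right, inner_smul_right, inner_smul_right,
    real_inner_comm d a] at ha
  rw [real_inner_comm d b] at hb
  rw [norm_sub_sq_real, inner_sub_right, real_inner_comm a b]
  linarith

theorem norm_sub_sq_add_inner_nonneg_of_cocoercive {a b c : E} {β : ℝ} (hβ : 0 ≤ β)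
    (hc : β * ‖c‖ ^ 2 ≤ ⟪b, c⟫) :
    0 ≤ ‖b - a‖ ^ 2 + 4 * β * ⟪a, c⟫ := by
  have hsq : 0 ≤ ‖b - a - (2 * β) • c‖ ^ 2 := sq_nonneg _
  rw [norm_sub_sq_real, inner_smul_right, norm_smul, mul_pow, Real.norm_eq_abs, sq_abs,
    inner_sub_left] at hsq
  linarith [mul_le_mul_of_nonneg_left hc (by positivity : (0 : ℝ) ≤ 4 * β)]

theorem davisYinOperator_norm_sq_add_le {JA JB C : E → E} {β γ : ℝ}
    (hJA : ∀ x y, ⟪JA x - JA y, x - y⟫ ≥ ‖JA x - JA y‖ ^ 2)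
    (hJB : ∀ x y, ⟪JB x - JB y, x - y⟫ ≥ ‖JB x - JB y‖ ^ 2)
    (hβ : 0 ≤ β) (hC : ∀ x y, ⟪x - y, C x - C y⟫ ≥ β * ‖C x - C y‖ ^ 2) (hγ : 0 ≤ γ)
    (x y : E) :
    2 * β * ‖davisYinOperator JA JB C γ x - davisYinOperator JA JB C γ y‖ ^ 2 +
        (2 * β - γ) * ‖(x - davisYinOperator JA JB C γ x) - (y - davisYinOperator JA JB C γ y)‖ ^ 2
      ≤ 2 * β * ‖x - y‖ ^ 2 := by
  set T := davisYinOperator JA JB C γ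
  set u := (2 : ℝ) • JB x - x - γ • C (JB x)
  set v := (2 : ℝ) • JB y - y - γ • C (JB y)
  set d := x - y
  set b := JB x - JB y
  set a := JA u - JA v
  set c := C (JB x) - C (JB y)
  have huv : u - v = (2 : ℝ) • b - d - γ • c := by simp only [u, v, b, c, d]; module
  have hfirm := norm_sub_sq_add_inner_le_inner_of_firm (hJB x y) (huv ▸ hJA u v)
  have hcoco := norm_sub_sq_add_inner_nonneg_of_cocoercive (a := a) hβ (hC (JB x) (JB y))
  have hT : T x - T y = d - (b - a) := by simp only [T, davisYinOperator, a, b, d]; abel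
  have hId : (x - T x) - (y - T y) = b - a := by rw [sub_sub_sub_comm, hT, sub_sub_cancel]
  rw [hT, hId, norm_sub_sq_real]
  linarith [mul_le_mul_of_nonneg_left hfirm (by positivity : (0 : ℝ) ≤ 4 * β),
    mul_nonneg hγ hcoco]

end

/-- Averagedness of the Davis–Yin operator: if `J_A, J_B` are
firmly nonexpansive, `C` is `β`-cocoercive, and `γ ∈ (0, 2β)`, then
`T_DY = Id - J_B + J_A ∘ (2 J_B - Id - γ C ∘ J_B)` is `α`-averaged with
`α = 2β/(4β - γ) ∈ (0,1)`, i.e. `T_DY = (1-α) Id + α R_DY` with `R_DY` nonexpansive. -/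
theorem davis_yin_operator_averaged
    {n : ℕ} (JA JB C : EuclideanSpace ℝ (Fin n) → EuclideanSpace ℝ (Fin n))
    (hJA : ∀ x y, (inner ℝ (JA x - JA y) (x - y) : ℝ) ≥ ‖JA x - JA y‖ ^ 2)
    (hJB : ∀ x y, (inner ℝ (JB x - JB y) (x - y) : ℝ) ≥ ‖JB x - JB y‖ ^ 2)
    (β : ℝ) (hβ : 0 < β)
    (hC : ∀ x y, (inner ℝ (x - y) (C x - C y) : ℝ) ≥ β * ‖C x - C y‖ ^ 2)
    (γ : ℝ) (hγ0 : 0 < γ) (hγ2β : γ < 2 * β) :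
    (0 < 2 * β / (4 * β - γ) ∧ 2 * β / (4 * β - γ) < 1) ∧
      ∃ RDY : EuclideanSpace ℝ (Fin n) → EuclideanSpace ℝ (Fin n),
        (∀ x y, ‖RDY x - RDY y‖ ≤ ‖x - y‖) ∧
        ∀ z, z - JB z + JA ((2 : ℝ) • JB z - z - γ • C (JB z)) =
          (1 - 2 * β / (4 * β - γ)) • z + (2 * β / (4 * β - γ)) • RDY z := by
  have hden : 0 < 4 * β - γ := by linarith
  have hα : 0 < 2 * β / (4 * β - γ) := by positivity
  refine ⟨⟨hα, by rw [div_lt_one hden]; linarith⟩, ?_⟩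
  refine exists_nonexpansive_eq_averaged_of_norm_sq_add_le hα fun x y => ?_
  have hkey := davisYinOperator_norm_sq_add_le hJA hJB hβ.le hC hγ0.le x y
  have hcoeff : 1 - 2 * β / (4 * β - γ) = (2 * β - γ) / (4 * β - γ) := by
    rw [eq_div_iff hden.ne', sub_mul, div_mul_cancel₀ _ hden.ne']; ring
  rw [hcoeff, div_mul_eq_mul_div, div_mul_eq_mul_div, div_mul_eq_mul_div, ← add_div]
  exact div_le_div_of_nonneg_right hkey hden.le
end

section
/- Let J_A, J_B : ℝ^n → ℝ^n be firmly nonexpansive, let C : ℝ^n → ℝ^n be β-cocoercive for β > 0, let γ ∈ (0, 2β), and suppose the Davis–Yin operator T_DY = Id − J_B + J_A ∘ (2J_B − Id − γ C ∘ J_B) has a nonempty fixed-point set. Then for any summable sequences (v_x^t), (v_y^t), (v_z^t) in ℝ^n and any z^0 ∈ ℝ^n, the perturbed Davis–Yin iteration x^t = J_B(z^t) + v_x^t, y^t = J_A(2x^t − z^t − γC(x^t)) + v_y^t, z^{t+1} = z^t + y^t − x^t + v_z^t generates a sequence (z^t) converging to some z⋆ with T_DY(z⋆) = z⋆, and the sequence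 (x^t) converges to J_B(z⋆). -/
/-!
The Davis–Yin operator `T` satisfies
`‖T z - T w‖² + (1 - γ / 2β) ‖(z - T z) - (w - T w)‖² ≤ ‖z - w‖²`, i.e. it is averaged, and the
perturbed scheme is the inexact iteration `z (t + 1) = T (z t) + e t` with summable errors `e`.
For such an iteration `‖z t - w‖` converges for every fixed point `w` (quasi-Fejér monotonicity),
which bounds `z` and forces the residuals `z t - T (z t)` to vanish; hence a cluster point, which
exists by compactness, is a fixed point `z⋆`, and since `‖z t - z⋆‖` converges and has a
subsequence tending to `0`, `z t → z⋆`. Continuity of `J_B` then gives `x t → J_B z⋆`.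
-/

open Filter Topology Function

theorem exists_tendsto_of_le_add_summable {a ε : ℕ → ℝ} (ha : ∀ t, 0 ≤ a t)
    (hε0 : ∀ t, 0 ≤ ε t) (hε : Summable ε) (h : ∀ t, a (t + 1) ≤ a t + ε t) :
    ∃ L, Tendsto a atTop (𝓝 L) := by
  set τ : ℕ → ℝ := fun t => ∑' i, ε (i + t)
  have hτ_succ (t : ℕ) : τ t = ε t + τ (t + 1) := by
    simpa [τ, add_assoc, add_comm 1] using
      ((summable_nat_add_iff t).mpr hε).tsum_eq_zero_add
  have hanti : Antitone (a + τ) :=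
    antitone_nat_of_succ_le fun t => by simp only [Pi.add_apply]; linarith [h t, hτ_succ t]
  have hbdd : BddBelow (Set.range (a + τ)) := by
    refine ⟨0, ?_⟩
    rintro _ ⟨t, rfl⟩
    exact add_nonneg (ha t) (tsum_nonneg fun i => hε0 _)
  have hτ : Tendsto τ atTop (𝓝 0) := tendsto_sum_nat_add ε
  exact ⟨_, by simpa using (tendsto_atTop_ciInf hanti hbdd).sub hτ⟩

section Averaged

variable {E : Type*} [NormedAddCommGroup E]

/-- `T` is `α`-averaged exactly when this holds with `κ = (1 - α) / α`. -/
def AveragedWith (κ : ℝ) (T : E → E) : Prop :=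
  ∀ z w, ‖T z - T w‖ ^ 2 + κ * ‖(z - T z) - (w - T w)‖ ^ 2 ≤ ‖z - w‖ ^ 2

namespace AveragedWith

variable {κ : ℝ} {T : E → E}

theorem lipschitzWith (hT : AveragedWith κ T) (hκ : 0 ≤ κ) : LipschitzWith 1 T := by
  refine LipschitzWith.of_dist_le_mul fun z w => ?_
  rw [dist_eq_norm, dist_eq_norm, NNReal.coe_one, one_mul]
  refine (sq_le_sq₀ (norm_nonneg _) (norm_nonneg _)).1 ?_
  nlinarith [hT z w, mul_nonneg hκ (sq_nonneg ‖(z - T z) - (w - T w)‖)]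

variable {w : E} {z e : ℕ → E}

theorem exists_tendsto_norm_sub (hT : AveragedWith κ T) (hκ : 0 ≤ κ) (hw : IsFixedPt T w)
    (hz : ∀ t, z (t + 1) = T (z t) + e t) (he : Summable fun t => ‖e t‖) :
    ∃ L, Tendsto (fun t => ‖z t - w‖) atTop (𝓝 L) := by
  refine exists_tendsto_of_le_add_summable (fun _ => norm_nonneg _) (fun _ => norm_nonneg _) he
    fun t => ?_
  calc ‖z (t + 1) - w‖ = ‖(T (z t) - T w) + e t‖ := by rw [hz, hw.eq]; abel_nf
    _ ≤ ‖T (z t) - T w‖ + ‖e t‖ := norm_add_le _ _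
    _ ≤ ‖z t - w‖ + ‖e t‖ := by
      gcongr; simpa using (hT.lipschitzWith hκ).norm_sub_le (z t) w

theorem tendsto_sub_self_zero (hT : AveragedWith κ T) (hκ : 0 < κ) (hw : IsFixedPt T w)
    (hz : ∀ t, z (t + 1) = T (z t) + e t) (he : Summable fun t => ‖e t‖) :
    Tendsto (fun t => z t - T (z t)) atTop (𝓝 0) := by
  obtain ⟨L, hL⟩ := hT.exists_tendsto_norm_sub hκ.le hw hz he
  have hTL : Tendsto (fun t => ‖T (z t) - w‖) atTop (𝓝 L) := by
    refine tendsto_of_tendsto_of_tendsto_of_le_of_le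
      (by simpa using ((tendsto_add_atTop_iff_nat 1).2 hL).sub he.tendsto_atTop_zero) hL
      (fun t => ?_) (fun t => ?_)
    · have h := norm_add_le (T (z t) - w) (e t)
      rw [show T (z t) - w + e t = z (t + 1) - w by rw [hz]; abel] at h
      simp only
      linarith
    · simpa [hw.eq] using (hT.lipschitzWith hκ.le).norm_sub_le (z t) w
  have hres (t : ℕ) : ‖z t - T (z t)‖ ^ 2 ≤ (‖z t - w‖ ^ 2 - ‖T (z t) - w‖ ^ 2) / κ := by
    have := hT (z t) w
    rw [hw.eq, sub_self, sub_zero] at this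
    rw [le_div_iff₀ hκ]
    linarith
  have hsq : Tendsto (fun t => ‖z t - T (z t)‖ ^ 2) atTop (𝓝 0) :=
    squeeze_zero (fun t => by positivity) hres
      (by simpa using ((hL.pow 2).sub (hTL.pow 2)).div_const κ)
  rw [tendsto_zero_iff_norm_tendsto_zero]
  simpa [Real.sqrt_sq (norm_nonneg _)] using hsq.sqrt

theorem exists_isFixedPt_tendsto [ProperSpace E] (hT : AveragedWith κ T) (hκ : 0 < κ)
    (hw : IsFixedPt T w) (hz : ∀ t, z (t + 1) = T (z t) + e t) (he : Summable fun t => ‖e t‖) :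
    ∃ zs, IsFixedPt T zs ∧ Tendsto z atTop (𝓝 zs) := by
  obtain ⟨R, hR⟩ := (hT.exists_tendsto_norm_sub hκ.le hw hz he).choose_spec.bddAbove_range
  have hball (t : ℕ) : z t ∈ Metric.closedBall w R := by
    rw [Metric.mem_closedBall, dist_eq_norm]
    exact hR ⟨t, rfl⟩
  obtain ⟨zs, -, φ, hφ, hzφ⟩ := tendsto_subseq_of_bounded Metric.isBounded_closedBall hball
  have hzs : IsFixedPt T zs := by
    have hlim := hzφ.sub (((hT.lipschitzWith hκ.le).continuous.tendsto zs).comp hzφ)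
    exact (sub_eq_zero.1 (tendsto_nhds_unique hlim
      ((hT.tendsto_sub_self_zero hκ hw hz he).comp hφ.tendsto_atTop))).symm
  obtain ⟨L, hL⟩ := hT.exists_tendsto_norm_sub hκ.le hzs hz he
  have hL0 : L = 0 :=
    tendsto_nhds_unique (hL.comp hφ.tendsto_atTop) (tendsto_iff_norm_sub_tendsto_zero.1 hzφ)
  exact ⟨zs, hzs, tendsto_iff_norm_sub_tendsto_zero.2 (hL0 ▸ hL)⟩

end AveragedWith

end Averaged

section DavisYin

open scoped InnerProductSpace

variable {E : Type*} [NormedAddCommGroup E] [InnerProductSpace ℝ E]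

def FirmlyNonexpansive (F : E → E) : Prop :=
  ∀ x y, ‖F x - F y‖ ^ 2 ≤ ⟪F x - F y, x - y⟫_ℝ

def Cocoercive (β : ℝ) (C : E → E) : Prop :=
  ∀ x y, β * ‖C x - C y‖ ^ 2 ≤ ⟪x - y, C x - C y⟫_ℝ

theorem FirmlyNonexpansive.lipschitzWith {F : E → E} (hF : FirmlyNonexpansive F) :
    LipschitzWith 1 F := by
  refine LipschitzWith.of_dist_le_mul fun x y => ?_
  rw [dist_eq_norm, dist_eq_norm, NNReal.coe_one, one_mul]
  have := (hF x y).trans (real_inner_le_norm _ _)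
  nlinarith [norm_nonneg (F x - F y), norm_nonneg (x - y)]

theorem Cocoercive.norm_sub_le {β : ℝ} {C : E → E} (hC : Cocoercive β C) (hβ : 0 < β)
    (x y : E) : ‖C x - C y‖ ≤ β⁻¹ * ‖x - y‖ := by
  rw [le_inv_mul_iff₀ hβ]
  have := (hC x y).trans (real_inner_le_norm _ _)
  nlinarith [norm_nonneg (C x - C y), norm_nonneg (x - y)]

def davisYin (JA JB C : E → E) (γ : ℝ) (w : E) : E :=
  w - JB w + JA ((2 : ℝ) • JB w - w - γ • C (JB w))

/-- Read with `d = z - w`, `p = J_B z - J_B w`, `c = C (J_B z) - C (J_B w)` and `q` the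
corresponding difference of `J_A`-values, this is the averagedness of the Davis–Yin operator. -/
theorem norm_add_sub_sq_add_le {β γ : ℝ} (hβ : 0 < β) (hγ : 0 ≤ γ) {d p q c : E}
    (hp : ‖p‖ ^ 2 ≤ ⟪p, d⟫_ℝ) (hq : ‖q‖ ^ 2 ≤ ⟪q, (2 : ℝ) • p - d - γ • c⟫_ℝ)
    (hc : β * ‖c‖ ^ 2 ≤ ⟪p, c⟫_ℝ) :
    ‖d + q - p‖ ^ 2 + (1 - γ / (2 * β)) * ‖q - p‖ ^ 2 ≤ ‖d‖ ^ 2 := by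
  have hcs : -⟪q - p, c⟫_ℝ ≤ ‖q - p‖ * ‖c‖ :=
    (neg_le_abs _).trans (abs_real_inner_le_norm _ _)
  have young : 2 * γ * (‖q - p‖ * ‖c‖) ≤ γ / (2 * β) * ‖q - p‖ ^ 2 + 2 * γ * β * ‖c‖ ^ 2 := by
    have h := mul_nonneg (div_nonneg hγ (by positivity : (0 : ℝ) ≤ 2 * β))
      (sq_nonneg (‖q - p‖ - 2 * β * ‖c‖))
    have hexp : γ / (2 * β) * (‖q - p‖ - 2 * β * ‖c‖) ^ 2 =
        γ / (2 * β) * ‖q - p‖ ^ 2 - 2 * γ * (‖q - p‖ * ‖c‖) + 2 * γ * β * ‖c‖ ^ 2 := by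
      field_simp
      ring
    linarith
  have e1 : ‖d + q - p‖ ^ 2 = ‖d‖ ^ 2 + 2 * ⟪d, q - p⟫_ℝ + ‖q - p‖ ^ 2 := by
    rw [add_sub_assoc, norm_add_sq_real]
  have e2 : ‖q - p‖ ^ 2 = ‖q‖ ^ 2 - 2 * ⟪q, p⟫_ℝ + ‖p‖ ^ 2 := norm_sub_sq_real q p
  have e3 : ⟪q, (2 : ℝ) • p - d - γ • c⟫_ℝ = 2 * ⟪q, p⟫_ℝ - ⟪q, d⟫_ℝ - γ * ⟪q, c⟫_ℝ := by
    simp only [inner_sub_right, inner_smul_right]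
  have e4 : ⟪d, q - p⟫_ℝ = ⟪q, d⟫_ℝ - ⟪p, d⟫_ℝ := by
    rw [inner_sub_right, real_inner_comm d q, real_inner_comm d p]
  have e5 : ⟪q - p, c⟫_ℝ = ⟪q, c⟫_ℝ - ⟪p, c⟫_ℝ := inner_sub_left _ _ _
  have h1 := mul_le_mul_of_nonneg_left hc hγ
  have h2 := mul_le_mul_of_nonneg_left hcs hγ
  rw [e5] at h2
  rw [e3] at hq
  rw [e1]
  linarith

variable {JA JB C : E → E} {β γ : ℝ}

theorem averagedWith_davisYin (hJA : FirmlyNonexpansive JA) (hJB : FirmlyNonexpansive JB)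
    (hC : Cocoercive β C) (hβ : 0 < β) (hγ : 0 ≤ γ) :
    AveragedWith (1 - γ / (2 * β)) (davisYin JA JB C γ) := by
  intro z w
  set u := (2 : ℝ) • JB z - z - γ • C (JB z)
  set u' := (2 : ℝ) • JB w - w - γ • C (JB w)
  have hq := hJA u u'
  rw [show u - u' = (2 : ℝ) • (JB z - JB w) - (z - w) - γ • (C (JB z) - C (JB w)) by
    simp only [u, u', smul_sub]; abel] at hq
  have key := norm_add_sub_sq_add_le hβ hγ (hJB z w) hq (hC (JB z) (JB w))
  have hdiff : davisYin JA JB C γ z - davisYin JA JB C γ w =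
      (z - w) + (JA u - JA u') - (JB z - JB w) := by
    simp only [davisYin, u, u']; abel
  have hres : (z - davisYin JA JB C γ z) - (w - davisYin JA JB C γ w) =
      -((JA u - JA u') - (JB z - JB w)) := by
    simp only [davisYin, u, u']; abel
  rwa [hdiff, hres, norm_neg]

theorem norm_perturbed_davisYin_sub_le (hJA : LipschitzWith 1 JA) (hC : Cocoercive β C)
    (hβ : 0 < β) (hγ : 0 ≤ γ) {z x y vx vy vz : E} (hx : x = JB z + vx)
    (hy : y = JA ((2 : ℝ) • x - z - γ • C x) + vy) :
    ‖z + y - x + vz - davisYin JA JB C γ z‖ ≤ (3 + γ / β) * ‖vx‖ + ‖vy‖ + ‖vz‖ := by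
  set u := (2 : ℝ) • x - z - γ • C x
  set u₀ := (2 : ℝ) • JB z - z - γ • C (JB z)
  have hu : ‖u - u₀‖ ≤ (2 + γ / β) * ‖vx‖ :=
    calc ‖u - u₀‖ = ‖(2 : ℝ) • vx - γ • (C x - C (JB z))‖ := by
          simp only [u, u₀, hx, smul_sub, smul_add]; abel_nf
      _ ≤ 2 * ‖vx‖ + γ * ‖C x - C (JB z)‖ := by
          refine (norm_sub_le _ _).trans_eq ?_
          rw [norm_smul, norm_smul, Real.norm_ofNat, Real.norm_of_nonneg hγ]
      _ ≤ 2 * ‖vx‖ + γ * (β⁻¹ * ‖vx‖) := by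
          gcongr
          simpa [hx] using hC.norm_sub_le hβ x (JB z)
      _ = (2 + γ / β) * ‖vx‖ := by ring
  calc ‖z + y - x + vz - davisYin JA JB C γ z‖ = ‖(JA u - JA u₀) + vy + vz - vx‖ := by
        simp only [davisYin, hy, hx, u, u₀]; abel_nf
    _ ≤ ‖JA u - JA u₀‖ + ‖vy‖ + ‖vz‖ + ‖vx‖ :=
        (norm_sub_le _ _).trans (by gcongr; exact norm_add₃_le)
    _ ≤ ‖u - u₀‖ + ‖vy‖ + ‖vz‖ + ‖vx‖ := by
        gcongr; simpa using hJA.norm_sub_le u u₀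
    _ ≤ (3 + γ / β) * ‖vx‖ + ‖vy‖ + ‖vz‖ := by linarith

end DavisYin

/-- Convergence of the perturbed Davis–Yin splitting: with
`J_A, J_B` firmly nonexpansive, `C` β-cocoercive, `γ ∈ (0, 2β)`, the Davis–Yin
operator `T_DY = Id - J_B + J_A ∘ (2 J_B - Id - γ C ∘ J_B)` having a fixed point,
and summable perturbations `v_x, v_y, v_z`, the perturbed iteration
`x^t = J_B z^t + v_x^t`, `y^t = J_A(2x^t - z^t - γ C x^t) + v_y^t`,
`z^{t+1} = z^t + y^t - x^t + v_z^t` yields `z^t → z⋆` with `T_DY z⋆ = z⋆`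
and `x^t → J_B z⋆`. -/
theorem perturbed_davis_yin_converges
    {n : ℕ} (JA JB C : EuclideanSpace ℝ (Fin n) → EuclideanSpace ℝ (Fin n))
    (hJA : ∀ x y, (inner ℝ (JA x - JA y) (x - y) : ℝ) ≥ ‖JA x - JA y‖ ^ 2)
    (hJB : ∀ x y, (inner ℝ (JB x - JB y) (x - y) : ℝ) ≥ ‖JB x - JB y‖ ^ 2)
    (β : ℝ) (hβ : 0 < β)
    (hC : ∀ x y, (inner ℝ (x - y) (C x - C y) : ℝ) ≥ β * ‖C x - C y‖ ^ 2)
    (γ : ℝ) (hγ0 : 0 < γ) (hγ2β : γ < 2 * β)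
    (hfix : {w : EuclideanSpace ℝ (Fin n) |
      w - JB w + JA ((2 : ℝ) • JB w - w - γ • C (JB w)) = w}.Nonempty)
    (vx vy vz : ℕ → EuclideanSpace ℝ (Fin n))
    (hvx : Summable fun t => ‖vx t‖)
    (hvy : Summable fun t => ‖vy t‖)
    (hvz : Summable fun t => ‖vz t‖)
    (x y z : ℕ → EuclideanSpace ℝ (Fin n))
    (hx : ∀ t, x t = JB (z t) + vx t)
    (hy : ∀ t, y t = JA ((2 : ℝ) • x t - z t - γ • C (x t)) + vy t)
    (hz : ∀ t, z (t + 1) = z t + y t - x t + vz t) :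
    ∃ zstar : EuclideanSpace ℝ (Fin n),
      zstar - JB zstar + JA ((2 : ℝ) • JB zstar - zstar - γ • C (JB zstar)) = zstar ∧
      Tendsto z atTop (𝓝 zstar) ∧
      Tendsto x atTop (𝓝 (JB zstar)) := by
  obtain ⟨w, hw⟩ := hfix
  have hκ : 0 < 1 - γ / (2 * β) := by rw [sub_pos, div_lt_one (by positivity)]; exact hγ2β
  set e := fun t => z (t + 1) - davisYin JA JB C γ (z t)
  have he : Summable fun t => ‖e t‖ := by
    refine .of_nonneg_of_le (fun _ => norm_nonneg _) (fun t => ?_)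
      (((hvx.mul_left (3 + γ / β)).add hvy).add hvz)
    simpa [e, hz t] using norm_perturbed_davisYin_sub_le (FirmlyNonexpansive.lipschitzWith hJA)
      hC hβ hγ0.le (hx t) (hy t)
  obtain ⟨zstar, hfixed, hzlim⟩ :=
    (averagedWith_davisYin hJA hJB hC hβ hγ0.le).exists_isFixedPt_tendsto hκ hw
      (fun t => (add_sub_cancel _ _).symm) he
  refine ⟨zstar, hfixed, hzlim, ?_⟩
  have hvx0 : Tendsto vx atTop (𝓝 0) :=
    tendsto_zero_iff_norm_tendsto_zero.2 hvx.tendsto_atTop_zero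
  simpa [funext hx] using
    ((FirmlyNonexpansive.lipschitzWith hJB).continuous.tendsto zstar |>.comp hzlim).add hvx0
end
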